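/- arXiv:2207.02557 — 2 statements merged into one kernel-verified Lean document; each statement's English description precedes it below -/
import Mathlib

section
/- Let X be a compact, ε-locally uniquely geodesic, geodesic metric space with π₁(X) ≠ 0. Then every non-contractible closed rectifiable curve in X has length strictly greater than ε. -/
open Set Filter Metric
open scoped ENNReal

/-- A constant-speed shortest path on `[0,1]` from `x` to `y`
(a shortest path parametrized proportionally to arc length). -/
def IsGeodSeg {X : Type*} [MetricSpace X] (γ : ℝ → X) (x y : X) : Prop :=
  γ 0 = x ∧ γ 1 = y ∧
    ∀ s ∈ Icc (0:ℝ) 1, ∀ t ∈ Icc (0:ℝ) 1, dist (γ s) (γ t) = |s - t| * dist x y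

/-- `γ` restricted to `[a,b]` is a constant-speed shortest path between its endpoints. -/
def IsGeodSegOn {X : Type*} [MetricSpace X] (γ : ℝ → X) (a b : ℝ) : Prop :=
  ∀ s ∈ Icc a b, ∀ t ∈ Icc a b,
    (b - a) * dist (γ s) (γ t) = |s - t| * dist (γ a) (γ b)

/-- A geodesic metric space: any two points are joined by a shortest path. -/
def GeodesicSpace (X : Type*) [MetricSpace X] : Prop :=
  ∀ x y : X, ∃ γ : ℝ → X, IsGeodSeg γ x y

/-- `X` is `ε`-locally uniquely geodesic: any two points at distance `≤ ε` are joined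
by a unique shortest path (parametrized proportionally to arc length on `[0,1]`). -/
def LocUniqGeo (X : Type*) [MetricSpace X] (ε : ℝ) : Prop :=
  ∀ x y : X, dist x y ≤ ε → ∃ γ : ℝ → X, IsGeodSeg γ x y ∧
    ∀ γ' : ℝ → X, IsGeodSeg γ' x y → EqOn γ' γ (Icc (0:ℝ) 1)

/-- A closed curve (loop), modelled as a continuous `1`-periodic map `ℝ → X`. -/
def IsLoop {X : Type*} [TopologicalSpace X] (γ : ℝ → X) : Prop :=
  Continuous γ ∧ ∀ t, γ (t + 1) = γ t

/-- The loop `γ` is null-homotopic (contractible) as a map `S¹ → X`. -/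
def NullHomotopicLoop {X : Type*} [TopologicalSpace X] (γ : ℝ → X) : Prop :=
  ∃ H : ℝ × ℝ → X, Continuous H ∧ (∀ t, H (t, 0) = γ t) ∧
    (∃ c, ∀ t, H (t, 1) = c) ∧ (∀ t s, H (t + 1, s) = H (t, s))

/-- Length of the closed curve `γ` (total variation over one period). -/
noncomputable def loopLength {X : Type*} [MetricSpace X] (γ : ℝ → X) : ℝ≥0∞ :=
  eVariationOn γ (Icc 0 1)

/-- A periodic geodesic: a closed curve which is locally length-minimizing. -/
def IsPeriodicGeodesic {X : Type*} [MetricSpace X] (γ : ℝ → X) : Prop :=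
  IsLoop γ ∧ ∃ δ > 0, ∀ s t : ℝ, s ≤ t → t - s ≤ δ →
    eVariationOn γ (Icc s t) = edist (γ s) (γ t)

/-! If the loop `γ` has length at most `ε`, every point `γ t` lies within `ε` of `γ 0`, so it is
joined to `γ 0` by a unique geodesic. In a compact space uniqueness forces these geodesics to
depend continuously on their endpoints (a limit of geodesics is a geodesic), and sliding `γ t`
along them to `γ 0` contracts `γ`. -/

open scoped Topology

theorem continuousOn_of_isClosed_graph {α Y : Type*} [TopologicalSpace α] [TopologicalSpace Y]
    [CompactSpace Y] {f : α → Y} {D : Set α} {G : Set (α × Y)} (hG : IsClosed G)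
    (hfG : ∀ w ∈ D, (w, f w) ∈ G) (huniq : ∀ w ∈ D, ∀ y, (w, y) ∈ G → y = f w) :
    ContinuousOn f D := by
  intro z hz
  refine tendsto_nhds_of_unique_mapClusterPt fun q hq => huniq z hz q ?_
  obtain ⟨U, hUD, hUq⟩ := mapClusterPt_iff_ultrafilter.1 hq
  have hUz : Tendsto (fun w => w) (U : Filter α) (𝓝 z) :=
    tendsto_id.mono_left (hUD.trans nhdsWithin_le_nhds)
  exact hG.mem_of_tendsto (hUz.prodMk_nhds hUq)
    (eventually_of_mem (hUD self_mem_nhdsWithin) hfG)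

noncomputable def concatAt {X : Type*} (α β : ℝ → X) (s : ℝ) : ℝ → X :=
  fun u => if u ≤ s then α (u / s) else β ((u - s) / (1 - s))

theorem concatAt_self {X : Type*} {α β : ℝ → X} {s : ℝ} (hs : 0 < s) :
    concatAt α β s s = α 1 := by
  simp [concatAt, hs.ne']

section Geodesics

variable {X : Type*} [MetricSpace X]

theorem IsGeodSeg.dist_of_le {γ : ℝ → X} {x y : X} (h : IsGeodSeg γ x y) {u v : ℝ}
    (hu : u ∈ Icc (0:ℝ) 1) (hv : v ∈ Icc (0:ℝ) 1) (huv : u ≤ v) :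
    dist (γ u) (γ v) = (v - u) * dist x y := by
  rw [h.2.2 u hu v hv, abs_sub_comm, abs_of_nonneg (sub_nonneg.2 huv)]

theorem IsGeodSeg.dist_left {γ : ℝ → X} {x y : X} (h : IsGeodSeg γ x y) {s : ℝ}
    (hs : s ∈ Icc (0:ℝ) 1) : dist x (γ s) = s * dist x y := by
  simpa [h.1] using h.dist_of_le (left_mem_Icc.2 zero_le_one) hs hs.1

theorem IsGeodSeg.dist_right {γ : ℝ → X} {x y : X} (h : IsGeodSeg γ x y) {s : ℝ}
    (hs : s ∈ Icc (0:ℝ) 1) : dist (γ s) y = (1 - s) * dist x y := by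
  simpa [h.2.1] using h.dist_of_le hs (right_mem_Icc.2 zero_le_one) hs.2

/-- The reverse inequality is forced by the triangle inequality through `σ u` and `σ v`. -/
theorem isGeodSeg_of_dist_le {σ : ℝ → X} {x y : X} (h0 : σ 0 = x) (h1 : σ 1 = y)
    (hle : ∀ u ∈ Icc (0:ℝ) 1, ∀ v ∈ Icc (0:ℝ) 1, u ≤ v →
      dist (σ u) (σ v) ≤ (v - u) * dist x y) :
    IsGeodSeg σ x y := by
  refine ⟨h0, h1, fun u hu v hv => ?_⟩
  wlog huv : u ≤ v generalizing u v
  · rw [dist_comm, abs_sub_comm]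
    exact this v hv u hu (le_of_not_ge huv)
  have hxu := hle 0 (left_mem_Icc.2 zero_le_one) u hu hu.1
  have hvy := hle v hv 1 (right_mem_Icc.2 zero_le_one) hv.2
  rw [h0] at hxu
  rw [h1] at hvy
  have := dist_triangle4 x (σ u) (σ v) y
  rw [abs_sub_comm, abs_of_nonneg (sub_nonneg.2 huv)]
  linarith [hle u hu v hv huv]

theorem isGeodSeg_concatAt {α β : ℝ → X} {x y p : X} {s : ℝ} (hα : IsGeodSeg α x p)
    (hβ : IsGeodSeg β p y) (hs0 : 0 < s) (hs1 : s < 1) (hxp : dist x p = s * dist x y)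
    (hpy : dist p y = (1 - s) * dist x y) :
    IsGeodSeg (concatAt α β s) x y := by
  set σ := concatAt α β s
  have h1s : 0 < 1 - s := sub_pos.2 hs1
  have hσr : ∀ u ∈ Icc s 1, σ u = β ((u - s) / (1 - s)) := by
    intro u hu
    rcases hu.1.eq_or_lt with rfl | hsu
    · simp [σ, concatAt_self hs0, hα.2.1, hβ.1]
    · simp [σ, concatAt, not_le.2 hsu]
  have hleft : ∀ u ∈ Icc 0 s, ∀ v ∈ Icc 0 s, u ≤ v → dist (σ u) (σ v) = (v - u) * dist x y := by
    intro u hu v hv huv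
    have hmem : ∀ w ∈ Icc 0 s, w / s ∈ Icc (0:ℝ) 1 := fun w hw =>
      ⟨div_nonneg hw.1 hs0.le, (div_le_one hs0).2 hw.2⟩
    simp only [σ, concatAt, if_pos hu.2, if_pos hv.2]
    rw [hα.dist_of_le (hmem u hu) (hmem v hv) (div_le_div_of_nonneg_right huv hs0.le), hxp]
    field_simp
  have hright : ∀ u ∈ Icc s 1, ∀ v ∈ Icc s 1, u ≤ v →
      dist (σ u) (σ v) = (v - u) * dist x y := by
    intro u hu v hv huv
    have hmem : ∀ w ∈ Icc s 1, (w - s) / (1 - s) ∈ Icc (0:ℝ) 1 := fun w hw =>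
      ⟨div_nonneg (sub_nonneg.2 hw.1) h1s.le, (div_le_one h1s).2 (by linarith [hw.2])⟩
    rw [hσr u hu, hσr v hv, hβ.dist_of_le (hmem u hu) (hmem v hv)
      (div_le_div_of_nonneg_right (by linarith) h1s.le), hpy]
    field_simp
    ring
  refine isGeodSeg_of_dist_le ?_ ?_ fun u hu v hv huv => ?_
  · simp [σ, concatAt, hs0.le, hα.1]
  · simpa [σ, concatAt, not_le.2 hs1, h1s.ne'] using hβ.2.1
  rcases le_total v s with hvs | hsv
  · exact (hleft u ⟨hu.1, huv.trans hvs⟩ v ⟨hv.1, hvs⟩ huv).le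
  rcases le_total s u with hsu | hus
  · exact (hright u ⟨hsu, hu.2⟩ v ⟨hsu.trans huv, hv.2⟩ huv).le
  calc dist (σ u) (σ v) ≤ dist (σ u) (σ s) + dist (σ s) (σ v) := dist_triangle _ _ _
    _ = (v - u) * dist x y := by
      rw [hleft u ⟨hu.1, hus⟩ s ⟨hs0.le, le_rfl⟩ hus,
        hright s ⟨le_rfl, hs1.le⟩ v ⟨hsv, hv.2⟩ hsv]
      ring

theorem GeodesicSpace.exists_isGeodSeg_apply_eq (hgeo : GeodesicSpace X) {x y p : X} {s : ℝ}
    (hs : s ∈ Icc (0:ℝ) 1) (hxp : dist x p = s * dist x y)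
    (hpy : dist p y = (1 - s) * dist x y) :
    ∃ σ : ℝ → X, IsGeodSeg σ x y ∧ σ s = p := by
  obtain ⟨γ, hγ⟩ := hgeo x y
  rcases hs.1.eq_or_lt with rfl | hs0
  · exact ⟨γ, hγ, hγ.1.trans (dist_eq_zero.1 (by simpa using hxp))⟩
  rcases hs.2.eq_or_lt with rfl | hs1
  · exact ⟨γ, hγ, hγ.2.1.trans (dist_eq_zero.1 (by simpa using hpy)).symm⟩
  obtain ⟨α, hα⟩ := hgeo x p
  obtain ⟨β, hβ⟩ := hgeo p y
  exact ⟨_, isGeodSeg_concatAt hα hβ hs0 hs1 hxp hpy, (concatAt_self hs0).trans hα.2.1⟩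

theorem LocUniqGeo.eqOn {ε : ℝ} (huniq : LocUniqGeo X ε) {x y : X} (hxy : dist x y ≤ ε)
    {γ γ' : ℝ → X} (hγ : IsGeodSeg γ x y) (hγ' : IsGeodSeg γ' x y) :
    EqOn γ γ' (Icc (0:ℝ) 1) := by
  obtain ⟨γ₀, -, hγ₀⟩ := huniq x y hxy
  exact fun s hs => (hγ₀ γ hγ hs).trans (hγ₀ γ' hγ' hs).symm

theorem LocUniqGeo.eq_apply_of_dist_eq {ε : ℝ} (huniq : LocUniqGeo X ε)
    (hgeo : GeodesicSpace X) {x y p : X} (hxy : dist x y ≤ ε) {s : ℝ} (hs : s ∈ Icc (0:ℝ) 1)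
    (hxp : dist x p = s * dist x y) (hpy : dist p y = (1 - s) * dist x y)
    {γ : ℝ → X} (hγ : IsGeodSeg γ x y) : p = γ s := by
  obtain ⟨σ, hσ, rfl⟩ := hgeo.exists_isGeodSeg_apply_eq hs hxp hpy
  exact huniq.eqOn hxy hσ hγ hs

theorem LocUniqGeo.continuousOn_geodesics [CompactSpace X] {ε : ℝ} (huniq : LocUniqGeo X ε)
    (hgeo : GeodesicSpace X) {g : X → X → ℝ → X} (hg : ∀ x y, IsGeodSeg (g x y) x y) :
    ContinuousOn (fun w : X × X × ℝ => g w.1 w.2.1 w.2.2)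
      {w | dist w.1 w.2.1 ≤ ε ∧ w.2.2 ∈ Icc (0:ℝ) 1} := by
  refine continuousOn_of_isClosed_graph
    (G := {q | dist q.1.1 q.2 = q.1.2.2 * dist q.1.1 q.1.2.1 ∧
      dist q.2 q.1.2.1 = (1 - q.1.2.2) * dist q.1.1 q.1.2.1})
    ((isClosed_eq (by fun_prop) (by fun_prop)).inter (isClosed_eq (by fun_prop) (by fun_prop)))
    (fun w hw => ⟨(hg _ _).dist_left hw.2, (hg _ _).dist_right hw.2⟩)
    fun w hw p hp => huniq.eq_apply_of_dist_eq hgeo hw.1 hw.2 hp.1 hp.2 (hg _ _)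

/-- Coning off along the geodesics to `x`. -/
theorem LocUniqGeo.nullHomotopicLoop_of_forall_dist_le [CompactSpace X] {ε : ℝ}
    (huniq : LocUniqGeo X ε) (hgeo : GeodesicSpace X) {γ : ℝ → X} (hγ : IsLoop γ) (x : X)
    (hdist : ∀ t, dist (γ t) x ≤ ε) : NullHomotopicLoop γ := by
  choose g hg using id hgeo
  have hcont := (huniq.continuousOn_geodesics hgeo hg).comp_continuous
    (f := fun q : ℝ × ℝ => (γ q.1, x, (projIcc 0 1 zero_le_one q.2 : ℝ)))
    (by have := hγ.1; fun_prop) fun q => ⟨hdist q.1, Subtype.mem _⟩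
  refine ⟨_, hcont, fun t => ?_, ⟨x, fun t => ?_⟩, fun t s => ?_⟩
  · simpa [projIcc_left] using (hg (γ t) x).1
  · simpa [projIcc_right] using (hg (γ t) x).2.1
  · simp only [Function.comp_apply, hγ.2 t]

theorem IsLoop.edist_le_loopLength {γ : ℝ → X} (hγ : IsLoop γ) (s t : ℝ) :
    edist (γ s) (γ t) ≤ loopLength γ := by
  have hper : Function.Periodic γ 1 := hγ.2
  have hfract : ∀ r, γ (Int.fract r) = γ r := fun r => by
    simpa only [mul_one, Int.fract] using hper.sub_int_mul_eq (x := r) ⌊r⌋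
  have hmem : ∀ r, Int.fract r ∈ Icc (0:ℝ) 1 := fun r =>
    ⟨Int.fract_nonneg r, (Int.fract_lt_one r).le⟩
  rw [← hfract s, ← hfract t]
  exact eVariationOn.edist_le γ (hmem s) (hmem t)

end Geodesics

theorem statement4_general {X : Type*} [MetricSpace X] [CompactSpace X] {ε : ℝ} (hε : 0 < ε)
    (hgeo : GeodesicSpace X) (huniq : LocUniqGeo X ε)
    (γ : ℝ → X) (hloop : IsLoop γ)
    (hnc : ¬ NullHomotopicLoop γ) :
    ENNReal.ofReal ε < loopLength γ := by
  refine lt_of_not_ge fun hle =>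
    hnc (huniq.nullHomotopicLoop_of_forall_dist_le hgeo hloop (γ 0) fun t => ?_)
  rw [← ENNReal.ofReal_le_ofReal_iff hε.le, ← edist_dist]
  exact (hloop.edist_le_loopLength t 0).trans hle

/-- In a compact `ε`-locally uniquely geodesic space with nontrivial fundamental
group, every non-contractible closed rectifiable curve has length `> ε`. -/
theorem statement4 {X : Type*} [MetricSpace X] [CompactSpace X] {ε : ℝ} (hε : 0 < ε)
    (hgeo : GeodesicSpace X) (huniq : LocUniqGeo X ε)
    (x : X) (hπ : Nontrivial (FundamentalGroup X x))
    (γ : ℝ → X) (hloop : IsLoop γ) (hrect : loopLength γ ≠ ⊤)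
    (hnc : ¬ NullHomotopicLoop γ) :
    ENNReal.ofReal ε < loopLength γ :=
  statement4_general hε hgeo huniq γ hloop hnc
end

section
/- Let X be an ε-locally uniquely geodesic geodesic metric space and γ : [0,1] → X a closed curve to which the Birkhoff shortening process D with parameter k applies (each γ([t, t+1/k]) has diameter < ε/2). If γ is Lipschitz with constant μ, then D(γ) is also Lipschitz with constant μ. -/
/-!
Between consecutive nodes the shortened curve is a constant-speed shortest path whose endpoints
are points of the old curve at parameter distance `1/k`, so its speed there is at most the
Lipschitz constant `μ` of the old curve. Lipschitz bounds on adjacent closed intervals glue by the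
triangle inequality at the common node, and periodicity makes the finitely many intervals of one
period cover the line. Both half-steps of the Birkhoff shortening are of this form.
-/

open Set Filter Metric
open scoped ENNReal

open Function
open scoped NNReal

section Gluing

variable {X : Type*} [PseudoMetricSpace X] {f : ℝ → X} {K : ℝ≥0}

theorem LipschitzOnWith.Icc_union_Icc {a b c : ℝ} (hab : a ≤ b) (hbc : b ≤ c)
    (h₁ : LipschitzOnWith K f (Icc a b)) (h₂ : LipschitzOnWith K f (Icc b c)) :
    LipschitzOnWith K f (Icc a c) := by
  refine LipschitzOnWith.of_dist_le_mul fun s hs t ht => ?_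
  wlog hst : s ≤ t generalizing s t
  · rw [dist_comm, dist_comm s]
    exact this t ht s hs (le_of_not_ge hst)
  rcases le_total t b with htb | hbt
  · exact h₁.dist_le_mul s ⟨hs.1, hst.trans htb⟩ t ⟨hs.1.trans hst, htb⟩
  rcases le_total b s with hbs | hsb
  · exact h₂.dist_le_mul s ⟨hbs, hst.trans ht.2⟩ t ⟨hbs.trans hst, ht.2⟩
  calc dist (f s) (f t) ≤ dist (f s) (f b) + dist (f b) (f t) := dist_triangle _ _ _
    _ ≤ K * dist s b + K * dist b t :=
        add_le_add (h₁.dist_le_mul s ⟨hs.1, hsb⟩ b ⟨hab, le_rfl⟩)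
          (h₂.dist_le_mul b ⟨le_rfl, hbc⟩ t ⟨hbt, ht.2⟩)
    _ = K * dist s t := by
        rw [Real.dist_eq, Real.dist_eq, Real.dist_eq, abs_of_nonpos (sub_nonpos.2 hsb),
          abs_of_nonpos (sub_nonpos.2 hbt), abs_of_nonpos (sub_nonpos.2 hst)]
        ring

theorem LipschitzWith.of_lipschitzOnWith_Icc {x : ℤ → ℝ} (hx : Monotone x)
    (hbot : Tendsto x atBot atBot) (htop : Tendsto x atTop atTop)
    (hf : ∀ j, LipschitzOnWith K f (Icc (x j) (x (j + 1)))) : LipschitzWith K f := by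
  have hIcc : ∀ i j, i ≤ j → LipschitzOnWith K f (Icc (x i) (x j)) := by
    intro i j hij
    induction j, hij using Int.leInduction with
    | base => exact (hf i).mono (Icc_subset_Icc_right (hx (Int.le_add_one le_rfl)))
    | succ j hij ih => exact ih.Icc_union_Icc (hx hij) (hx (Int.le_add_one le_rfl)) (hf j)
  intro s t
  obtain ⟨i, hi⟩ := (hbot.eventually (eventually_le_atBot (min s t))).exists
  obtain ⟨j, hj, hij⟩ :=
    ((htop.eventually (eventually_ge_atTop (max s t))).and (eventually_ge_atTop i)).exists
  exact hIcc i j hij ⟨hi.trans (min_le_left _ _), (le_max_left _ _).trans hj⟩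
    ⟨hi.trans (min_le_right _ _), (le_max_right _ _).trans hj⟩

end Gluing

theorem Int.forall_of_periodic_of_forall_fin {P : ℤ → Prop} {k : ℕ} (hk : 0 < k)
    (hP : Periodic P k) (h : ∀ i : Fin k, P (i : ℕ)) (j : ℤ) : P j := by
  obtain ⟨r, ⟨hr0, hrk⟩, hr⟩ := hP.exists_mem_Ico₀ (by exact_mod_cast hk) j
  lift r to ℕ using hr0
  exact hr ▸ h ⟨r, by exact_mod_cast hrk⟩

section Geodesic

variable {X : Type*} [MetricSpace X] {f : ℝ → X}

theorem IsGeodSegOn.lipschitzOnWith {a b : ℝ} {K : ℝ≥0} (hf : IsGeodSegOn f a b) (hab : a < b)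
    (hK : dist (f a) (f b) ≤ K * (b - a)) : LipschitzOnWith K f (Icc a b) := by
  refine LipschitzOnWith.of_dist_le_mul fun s hs t ht => ?_
  refine le_of_mul_le_mul_left ?_ (sub_pos.2 hab)
  calc (b - a) * dist (f s) (f t) = |s - t| * dist (f a) (f b) := hf s hs t ht
    _ ≤ |s - t| * (K * (b - a)) := by gcongr
    _ = (b - a) * (K * dist s t) := by rw [Real.dist_eq]; ring

theorem Function.Periodic.isGeodSegOn_add_iff {c : ℝ} (hf : Periodic f c) {a b : ℝ} :
    IsGeodSegOn f (a + c) (b + c) ↔ IsGeodSegOn f a b := by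
  simp only [IsGeodSegOn, ← image_add_const_Icc, forall_mem_image, hf _,
    add_sub_add_right_eq_sub]

end Geodesic

structure IsShorteningStep {X : Type*} [MetricSpace X] (g f : ℝ → X) (k : ℕ) (a : ℝ) :
    Prop where
  eq_on_nodes : ∀ i : Fin k, f (a + i / k) = g (a + i / k)
  isGeodSegOn : ∀ i : Fin k, IsGeodSegOn f (a + i / k) (a + (i + 1) / k)

theorem IsShorteningStep.lipschitzWith {X : Type*} [MetricSpace X] {g f : ℝ → X} {k : ℕ}
    {a : ℝ} {K : ℝ≥0} (h : IsShorteningStep g f k a) (hk : 0 < k) (hg : Periodic g 1)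
    (hf : Periodic f 1) (hgK : LipschitzWith K g) : LipschitzWith K f := by
  have hk' : (0 : ℝ) < k := by exact_mod_cast hk
  set x : ℤ → ℝ := fun j => a + j / k with hx
  have hx_add : ∀ j : ℤ, x (j + k) = x j + 1 := fun j => by
    simp only [hx, Int.cast_add, Int.cast_natCast, add_div, div_self hk'.ne']
    ring
  have hx_mono : StrictMono x := fun i j hij => by
    simp only [hx]
    gcongr
  have hnode : ∀ j, f (x j) = g (x j) :=
    Int.forall_of_periodic_of_forall_fin hk (fun j => by simp only [hx_add, hf _, hg _])
      (by simpa [hx] using h.eq_on_nodes)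
  have hseg : ∀ j, IsGeodSegOn f (x j) (x (j + 1)) :=
    Int.forall_of_periodic_of_forall_fin hk
      (fun j => by
        simp only [add_right_comm j (k : ℤ) 1, hx_add, hf.isGeodSegOn_add_iff])
      (by simpa [hx] using h.isGeodSegOn)
  refine LipschitzWith.of_lipschitzOnWith_Icc hx_mono.monotone
    (tendsto_atBot_add_const_left _ a
      ((tendsto_intCast_atBot_iff.2 tendsto_id).atBot_div_const hk'))
    (tendsto_atTop_add_const_left _ a (tendsto_intCast_atTop_atTop.atTop_div_const hk'))
    fun j => (hseg j).lipschitzOnWith (hx_mono (lt_add_one j)) ?_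
  rw [hnode, hnode, ← abs_of_pos (sub_pos.2 (hx_mono (lt_add_one j))), ← Real.dist_eq,
    dist_comm]
  exact hgK.dist_le_mul _ _

theorem statement7_general
    {X : Type*} [MetricSpace X]
    (k : ℕ) (hk : 0 < k) (γ γ₁ γ₂ : ℝ → X)
    (hloop : IsLoop γ) (hper1 : ∀ t, γ₁ (t + 1) = γ₁ t) (hper2 : ∀ t, γ₂ (t + 1) = γ₂ t)
    (h1a : ∀ i : Fin k, γ₁ ((2*(i:ℝ))/(2*k)) = γ ((2*(i:ℝ))/(2*k)))
    (h1b : ∀ i : Fin k, IsGeodSegOn γ₁ ((2*(i:ℝ))/(2*k)) ((2*(i:ℝ)+2)/(2*k)))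
    (h2a : ∀ i : Fin k, γ₂ ((2*(i:ℝ)+1)/(2*k)) = γ₁ ((2*(i:ℝ)+1)/(2*k)))
    (h2b : ∀ i : Fin k, IsGeodSegOn γ₂ ((2*(i:ℝ)+1)/(2*k)) ((2*(i:ℝ)+3)/(2*k)))
    (μ : ℝ) (hμ : ∀ s t : ℝ, dist (γ s) (γ t) ≤ μ * |s - t|) :
    ∀ s t : ℝ, dist (γ₂ s) (γ₂ t) ≤ μ * |s - t| := by
  have hμ0 : 0 ≤ μ := by simpa using dist_nonneg.trans (hμ 0 1)
  lift μ to ℝ≥0 using hμ0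
  have hγ : LipschitzWith μ γ := LipschitzWith.of_dist_le_mul fun s t => hμ s t
  have e₀ : ∀ i : ℝ, 2 * i / (2 * k) = 0 + i / k := fun i => by field_simp; ring
  have e₁ : ∀ i : ℝ, (2 * i + 1) / (2 * k) = 1 / (2 * k) + i / k := fun i => by
    field_simp; ring
  have e₂ : ∀ i : ℝ, (2 * i + 2) / (2 * k) = 0 + (i + 1) / k := fun i => by field_simp; ring
  have e₃ : ∀ i : ℝ, (2 * i + 3) / (2 * k) = 1 / (2 * k) + (i + 1) / k := fun i => by
    field_simp; ring
  have step₁ : IsShorteningStep γ γ₁ k 0 :=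
    ⟨fun i => by rw [← e₀]; exact h1a i, fun i => by rw [← e₂, ← e₀]; exact h1b i⟩
  have step₂ : IsShorteningStep γ₁ γ₂ k (1 / (2 * k)) :=
    ⟨fun i => by rw [← e₁]; exact h2a i, fun i => by rw [← e₃, ← e₁]; exact h2b i⟩
  have hγ₂ := step₂.lipschitzWith hk hper1 hper2 (step₁.lipschitzWith hk hloop.2 hper1 hγ)
  exact fun s t => hγ₂.dist_le_mul s t

/-- If `γ` is `μ`-Lipschitz then its Birkhoff shortening `D(γ) = γ₂` is
`μ`-Lipschitz as well. -/
theorem statement7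
    {X : Type*} [MetricSpace X] {ε : ℝ} (hε : 0 < ε)
    (hgeo : GeodesicSpace X) (huniq : LocUniqGeo X ε)
    (k : ℕ) (hk : 0 < k) (γ γ₁ γ₂ : ℝ → X)
    (hloop : IsLoop γ) (hper1 : ∀ t, γ₁ (t + 1) = γ₁ t) (hper2 : ∀ t, γ₂ (t + 1) = γ₂ t)
    (hdiam : ∀ t s s' : ℝ, s ∈ Icc t (t + 1/(k:ℝ)) → s' ∈ Icc t (t + 1/(k:ℝ)) →
      dist (γ s) (γ s') < ε/2)
    (h1a : ∀ i : Fin k, γ₁ ((2*(i:ℝ))/(2*k)) = γ ((2*(i:ℝ))/(2*k)))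
    (h1b : ∀ i : Fin k, IsGeodSegOn γ₁ ((2*(i:ℝ))/(2*k)) ((2*(i:ℝ)+2)/(2*k)))
    (h2a : ∀ i : Fin k, γ₂ ((2*(i:ℝ)+1)/(2*k)) = γ₁ ((2*(i:ℝ)+1)/(2*k)))
    (h2b : ∀ i : Fin k, IsGeodSegOn γ₂ ((2*(i:ℝ)+1)/(2*k)) ((2*(i:ℝ)+3)/(2*k)))
    (μ : ℝ) (hμ : ∀ s t : ℝ, dist (γ s) (γ t) ≤ μ * |s - t|) :
    ∀ s t : ℝ, dist (γ₂ s) (γ₂ t) ≤ μ * |s - t| :=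
  statement7_general k hk γ γ₁ γ₂ hloop hper1 hper2 h1a h1b h2a h2b μ hμ
end
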